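/- Let T be a tree on vertex set [n] and B ⊆ [n] with |B| = n - 1. Then det(L^q_T[B|B]) = 1, where L^q_T[B|B] is the principal submatrix of the q-Laplacian L^q_T = I + q^2(D-I) - qA obtained by deleting the row and column of the single vertex outside B. -/

import Mathlib

/-!
Root the tree at the vertex `r` outside `B` and let `P` be the matrix on the other vertices with
`P v w = 1` exactly when `w` is the parent of `v`. The neighbours of a non-root vertex are its
parent and its children, so `P + Pᵀ = A` and `Pᵀ P = D - I` on these vertices, whence
`L^q_T[B|B] = (I - qP)ᵀ (I - qP)`. A parent is strictly closer to the root than its child, so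
`I - qP` is unitriangular once the vertices are ordered by depth, and its determinant is `1`.
-/

open Polynomial

noncomputable def qLap {n : ℕ} (G : SimpleGraph (Fin n)) [DecidableRel G.Adj]
    {R : Type*} [CommRing R] (q : R) : Matrix (Fin n) (Fin n) R :=
  Matrix.of fun i j =>
    if i = j then 1 + q ^ 2 * ((G.degree i : R) - 1)
    else if G.Adj i j then -q else 0

open Finset
open scoped Matrix

theorem Matrix.det_one_sub_eq_one_of_lt {m α R : Type*} [Fintype m] [DecidableEq m] [CommRing R]
    [LinearOrder α] {N : Matrix m m R} (b : m → α) (hN : ∀ i j, N i j ≠ 0 → b j < b i) :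
    (1 - N).det = 1 := by
  have hzero : ∀ i j, b i ≤ b j → N i j = 0 := fun i j hij =>
    by_contra fun h => (hij.trans_lt (hN i j h)).false
  have htri : (1 - N).BlockTriangular (OrderDual.toDual ∘ b) := fun i j hij => by
    have hij : b i < b j := hij
    simp [hzero i j hij.le, Matrix.one_apply_ne (fun h : i = j => (h ▸ hij).false)]
  rw [htri.det]
  refine prod_eq_one fun a _ => ?_
  have hblock : (1 - N).toSquareBlock (OrderDual.toDual ∘ b) a = 1 := by
    ext ⟨i, hi⟩ ⟨j, hj⟩
    have hij : b i = b j := OrderDual.toDual.injective (hi.trans hj.symm)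
    simp [Matrix.toSquareBlock_def, Matrix.one_apply, hzero i j hij.le]
  rw [hblock, Matrix.det_one]

noncomputable def SimpleGraph.qLapMatrix {V : Type*} [Fintype V] [DecidableEq V]
    (G : SimpleGraph V) [DecidableRel G.Adj] {R : Type*} [CommRing R] (q : R) : Matrix V V R :=
  1 + q ^ 2 • Matrix.diagonal (fun v => (G.degree v : R) - 1) - q • G.adjMatrix R

namespace SimpleGraph.IsTree

variable {V : Type*} {G : SimpleGraph V} (hG : G.IsTree) (r : V)

noncomputable def pathFrom (v : V) : G.Walk r v :=
  (hG.existsUnique_path r v).exists.choose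

theorem isPath_pathFrom (v : V) : (hG.pathFrom r v).IsPath :=
  (hG.existsUnique_path r v).exists.choose_spec

theorem eq_pathFrom {v : V} {p : G.Walk r v} (hp : p.IsPath) : p = hG.pathFrom r v :=
  (hG.existsUnique_path r v).unique hp (hG.isPath_pathFrom r v)

/-- The root is its own parent: the penultimate vertex of the empty walk. -/
noncomputable def parent (v : V) : V := (hG.pathFrom r v).penultimate

noncomputable def depth (v : V) : ℕ := (hG.pathFrom r v).length

variable {r}

theorem parent_root : hG.parent r r = r := by
  rw [parent, ← hG.eq_pathFrom r Walk.IsPath.nil, Walk.penultimate_nil]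

theorem parent_adj {v : V} (hv : v ≠ r) : G.Adj (hG.parent r v) v :=
  Walk.adj_penultimate (Walk.not_nil_of_ne hv.symm)

theorem pathFrom_eq_concat {v w : V} (h : G.Adj v w) (hv : v ∈ (hG.pathFrom r w).support) :
    hG.pathFrom r w = (hG.pathFrom r v).concat h :=
  hG.isAcyclic.path_concat (hG.isPath_pathFrom r v) (hG.isPath_pathFrom r w) h hv

theorem depth_parent_add_one {v : V} (hv : v ≠ r) :
    hG.depth r (hG.parent r v) + 1 = hG.depth r v := by
  rw [depth, depth, hG.pathFrom_eq_concat (hG.parent_adj hv) (Walk.getVert_mem_support _ _),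
    Walk.length_concat]

theorem parent_eq_or_parent_eq_of_adj {v w : V} (h : G.Adj v w) :
    hG.parent r v = w ∨ hG.parent r w = v := by
  by_cases hv : v ∈ (hG.pathFrom r w).support
  · right
    rw [parent, hG.pathFrom_eq_concat h hv, Walk.penultimate_concat]
  · left
    have hw := hG.isAcyclic.mem_support_of_ne_mem_support_of_adj_of_isPath
      (hG.isPath_pathFrom r v) (hG.isPath_pathFrom r w) h hv
    rw [parent, hG.pathFrom_eq_concat h.symm hw, Walk.penultimate_concat]

theorem adj_iff_parent_eq {v w : V} (hv : v ≠ r) (hw : w ≠ r) :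
    G.Adj v w ↔ hG.parent r v = w ∨ hG.parent r w = v := by
  refine ⟨hG.parent_eq_or_parent_eq_of_adj, ?_⟩
  rintro (rfl | rfl)
  · exact (hG.parent_adj hv).symm
  · exact hG.parent_adj hw

theorem parent_parent_ne {v : V} (hv : v ≠ r) : hG.parent r (hG.parent r v) ≠ v := by
  intro h
  by_cases hp : hG.parent r v = r
  · rw [hp, hG.parent_root] at h
    exact hv h.symm
  have h₁ := hG.depth_parent_add_one hv
  have h₂ := hG.depth_parent_add_one hp
  rw [h] at h₂
  omega

theorem neighborFinset_eq [Fintype V] [DecidableEq V] [DecidableRel G.Adj] {v : V}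
    (hv : v ≠ r) :
    G.neighborFinset v = insert (hG.parent r v) ({w | hG.parent r w = v} : Finset V) := by
  ext w
  simp only [mem_neighborFinset, mem_insert, mem_filter, mem_univ, true_and]
  constructor
  · intro h
    rcases hG.parent_eq_or_parent_eq_of_adj h with h | h
    exacts [Or.inl h.symm, Or.inr h]
  · rintro (rfl | rfl)
    · exact (hG.parent_adj hv).symm
    · exact hG.parent_adj fun hw => hv (hw ▸ hG.parent_root)

theorem degree_eq_card_children_add_one [Fintype V] [DecidableEq V] [DecidableRel G.Adj] {v : V}
    (hv : v ≠ r) : G.degree v = #{w | hG.parent r w = v} + 1 := by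
  rw [← card_neighborFinset_eq_degree, hG.neighborFinset_eq hv, card_insert_of_notMem]
  simpa using hG.parent_parent_ne hv

section Matrix

variable [DecidableEq V] {R : Type*} [CommRing R]

variable (r R) in
noncomputable def parentMatrix : Matrix {v // v ≠ r} {v // v ≠ r} R :=
  Matrix.of fun v w => if hG.parent r v = w then 1 else 0

theorem parentMatrix_add_transpose [DecidableRel G.Adj] :
    hG.parentMatrix r R + (hG.parentMatrix r R)ᵀ = (G.adjMatrix R).submatrix (↑) (↑) := by
  ext v w
  simp only [parentMatrix, Matrix.add_apply, Matrix.transpose_apply, Matrix.of_apply,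
    Matrix.submatrix_apply, adjMatrix_apply, hG.adj_iff_parent_eq v.2 w.2]
  by_cases h : hG.parent r v = w
  · have h' : hG.parent r w ≠ v := h ▸ hG.parent_parent_ne v.2
    simp [h, h']
  · simp [h]

theorem transpose_parentMatrix_mul_self [Fintype V] [DecidableRel G.Adj] :
    (hG.parentMatrix r R)ᵀ * hG.parentMatrix r R =
      Matrix.diagonal fun v : {v // v ≠ r} => (G.degree v : R) - 1 := by
  ext v w
  have hsum : ∀ f : V → R, f r = 0 → ∑ k : {k // k ≠ r}, f k = ∑ k, f k := fun f hf => by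
    rw [← sum_subtype (univ.erase r) (by simp), sum_erase _ hf]
  simp only [Matrix.mul_apply, Matrix.transpose_apply, parentMatrix, Matrix.of_apply,
    Matrix.diagonal_apply]
  simp_rw [ite_zero_mul_ite_zero, one_mul]
  rw [hsum (fun k => if hG.parent r k = v ∧ hG.parent r k = w then 1 else 0)
    (by simp [hG.parent_root, v.2.symm])]
  split_ifs with h
  · subst h
    rw [sum_boole, hG.degree_eq_card_children_add_one v.2]
    simp
  · exact sum_eq_zero fun k _ => if_neg fun hk => h (Subtype.ext (hk.1.symm.trans hk.2))

theorem transpose_mul_self_one_sub_smul_parentMatrix [Fintype V] [DecidableRel G.Adj] (q : R) :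
    (1 - q • hG.parentMatrix r R)ᵀ * (1 - q • hG.parentMatrix r R) =
      1 + q ^ 2 • Matrix.diagonal (fun v : {v // v ≠ r} => (G.degree v : R) - 1)
        - q • (G.adjMatrix R).submatrix (↑) (↑) := by
  rw [← hG.parentMatrix_add_transpose, ← hG.transpose_parentMatrix_mul_self]
  simp only [Matrix.transpose_sub, Matrix.transpose_one, Matrix.transpose_smul, Matrix.sub_mul,
    Matrix.mul_sub, Matrix.smul_mul, Matrix.mul_smul, Matrix.one_mul, Matrix.mul_one, smul_add]
  module

theorem det_one_sub_smul_parentMatrix [Fintype V] (q : R) :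
    (1 - q • hG.parentMatrix r R).det = 1 :=
  Matrix.det_one_sub_eq_one_of_lt (fun v => hG.depth r v) fun v w hvw => by
    have h : hG.parent r v = w := by
      by_contra h
      simp [parentMatrix, h] at hvw
    have := hG.depth_parent_add_one v.2
    rw [h] at this
    omega

variable (r) in
theorem det_qLapMatrix_submatrix_ne [Fintype V] [DecidableRel G.Adj] (hG : G.IsTree) (q : R) :
    ((G.qLapMatrix q).submatrix ((↑) : {v // v ≠ r} → V) (↑)).det = 1 := by
  have hfactor : (G.qLapMatrix q).submatrix (↑) (↑) =
      (1 - q • hG.parentMatrix r R)ᵀ * (1 - q • hG.parentMatrix r R) := by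
    rw [hG.transpose_mul_self_one_sub_smul_parentMatrix]
    ext v w
    simp [qLapMatrix, Matrix.one_apply, Matrix.diagonal_apply, Subtype.ext_iff]
  rw [hfactor, Matrix.det_mul, Matrix.det_transpose, hG.det_one_sub_smul_parentMatrix, mul_one]

end Matrix

end SimpleGraph.IsTree

theorem qLap_eq_qLapMatrix {n : ℕ} (G : SimpleGraph (Fin n)) [DecidableRel G.Adj]
    {R : Type*} [CommRing R] (q : R) : qLap G q = G.qLapMatrix q := by
  ext i j
  by_cases h : i = j
  · subst h
    simp [qLap, SimpleGraph.qLapMatrix]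
  · simp only [qLap, SimpleGraph.qLapMatrix, Matrix.of_apply, Matrix.sub_apply,
      Matrix.add_apply, Matrix.smul_apply, Matrix.one_apply_ne h, Matrix.diagonal_apply_ne _ h,
      SimpleGraph.adjMatrix_apply, if_neg h]
    split_ifs <;> simp

/-- For a tree `T` on `[n]` and `B ⊆ [n]` with `|B| = n - 1`, the principal
minor `det(L^q_T[B|B])` equals `1` in `ℝ[q]`. -/
theorem qLap_principal_minor_card_pred {n : ℕ} (G : SimpleGraph (Fin n))
    [DecidableRel G.Adj] (hG : G.IsTree) (B : Finset (Fin n))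
    (hB : B.card = n - 1) :
    ((qLap G (X : Polynomial ℝ)).submatrix
        (fun i : B => (i : Fin n)) (fun i : B => (i : Fin n))).det = 1 := by
  have hn : 0 < n := Fin.pos hG.connected.nonempty.some
  obtain ⟨r, hr⟩ : ∃ r, Bᶜ = {r} :=
    card_eq_one.mp (by rw [card_compl, hB, Fintype.card_fin]; omega)
  have hmem : ∀ v, v ≠ r ↔ v ∈ B := fun v => by
    rw [← not_iff_not, not_not, ← mem_compl, hr, mem_singleton]
  rw [← Matrix.det_submatrix_equiv_self (Equiv.subtypeEquivRight hmem),
    Matrix.submatrix_submatrix, qLap_eq_qLapMatrix]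
  exact hG.det_qLapMatrix_submatrix_ne r X
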